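/- Let k ≥ 1 and let z = (z_1,…,z_k) be any binary string of length k. For any bits x_1,…,x_{k−1}, the interleaved string (z_1,x_1,z_2,x_2,…,z_{k−1},x_{k−1},z_k) of length 2k−1 has exact gapped k-deck equal to the multiset containing z exactly once. Consequently, for every k ≥ 2 there exist two distinct binary strings of length 2k−1 with the same exact gapped k-deck, and 2k−1 is the smallest length for which a string has a nonempty exact gapped k-deck (a string of length less than 2k−1 has no gapped subsequence of length k). -/
import Mathlib


/-- The multiset of all `s`-gapped subsequences of a binary string (all lengths,
including the empty subsequence), counted with multiplicity over index choices:
consecutive chosen indices must differ by at least `s`. -/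
def gappedSubseqs (s : ℕ) : List Bool → Multiset (List Bool)
  | [] => {[]}
  | a :: l => gappedSubseqs s l + (gappedSubseqs s (l.drop (s - 1))).map (a :: ·)
termination_by x => x.length
decreasing_by
  · simp
  · simp only [List.length_drop, List.length_cons]; omega

/-- The `s`-gapped `k`-deck: all `s`-gapped subsequences of length between 1 and `k`. -/
def gDeck (s k : ℕ) (x : List Bool) : Multiset (List Bool) :=
  (gappedSubseqs s x).filter (fun w => 1 ≤ w.length ∧ w.length ≤ k)

/-- The exact `s`-gapped `k`-deck: all `s`-gapped subsequences of length exactly `k`. -/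
def dDeck (s k : ℕ) (x : List Bool) : Multiset (List Bool) :=
  (gappedSubseqs s x).filter (fun w => w.length = k)

/-- The classical (ungapped) `k`-deck: the multiset of all length-`k` subsequences. -/
def deck (k : ℕ) (x : List Bool) : Multiset (List Bool) :=
  (gappedSubseqs 1 x).filter (fun w => w.length = k)

/-- The gapped `k`-deck `B^(k)` (gap `2`). -/
def Bdeck (k : ℕ) (x : List Bool) : Multiset (List Bool) := gDeck 2 k x

/-- `B_L^(k)`: the gapped `k`-deck of the string punctured on the left. -/
def BLdeck (k : ℕ) (x : List Bool) : Multiset (List Bool) := Bdeck k x.tail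

/-- `B_R^(k)`: the gapped `k`-deck of the string punctured on the right. -/
def BRdeck (k : ℕ) (x : List Bool) : Multiset (List Bool) := Bdeck k x.dropLast

/-- `B_LR^(k)`: the gapped `k`-deck of the string punctured on both ends. -/
def BLRdeck (k : ℕ) (x : List Bool) : Multiset (List Bool) := Bdeck k x.tail.dropLast

/-- `S(k)`: the smallest positive `n` such that two distinct binary strings of
length `n` share the same `k`-deck. -/
noncomputable def Sval (k : ℕ) : ℕ :=
  sInf {n | 0 < n ∧ ∃ x y : List Bool, x.length = n ∧ y.length = n ∧ x ≠ y ∧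
    deck k x = deck k y}

/-- `G(k)`: the smallest positive `n` such that two distinct binary strings of
length `n` share the same gapped `k`-deck. -/
noncomputable def Gval (k : ℕ) : ℕ :=
  sInf {n | 0 < n ∧ ∃ x y : List Bool, x.length = n ∧ y.length = n ∧ x ≠ y ∧
    Bdeck k x = Bdeck k y}

/-- `G_s(k)`: the smallest positive `n` such that two distinct binary strings of
length `n` share the same `s`-gapped `k`-deck. -/
noncomputable def Gs (s k : ℕ) : ℕ :=
  sInf {n | 0 < n ∧ ∃ x y : List Bool, x.length = n ∧ y.length = n ∧ x ≠ y ∧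
    gDeck s k x = gDeck s k y}

/-- `G*(k)`: the smallest positive `n` such that two distinct binary strings of
length `n` share the same gapped `k`-deck, also after puncturing on the left,
right and both sides. -/
noncomputable def Gstar (k : ℕ) : ℕ :=
  sInf {n | 0 < n ∧ ∃ x y : List Bool, x.length = n ∧ y.length = n ∧ x ≠ y ∧
    Bdeck k x = Bdeck k y ∧ BLdeck k x = BLdeck k y ∧
    BRdeck k x = BRdeck k y ∧ BLRdeck k x = BLRdeck k y}

mutual
/-- Morse-Thue string `x^(k+1)` (index shifted: `mtX 0 = x^(1) = (0,1)`). -/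
def mtX : ℕ → List Bool
  | 0 => [false, true]
  | k + 1 => mtX k ++ mtY k
/-- Morse-Thue string `y^(k+1)` (index shifted: `mtY 0 = y^(1) = (1,0)`). -/
def mtY : ℕ → List Bool
  | 0 => [true, false]
  | k + 1 => mtY k ++ mtX k
end

mutual
/-- Padded Morse-Thue string `x^(k+1)` (index shifted: `px 0 = x^(1) = (0,0,1,0)`). -/
def px : ℕ → List Bool
  | 0 => [false, false, true, false]
  | k + 1 => [false] ++ px k ++ [false, false] ++ py k ++ [false]
/-- Padded Morse-Thue string `y^(k+1)` (index shifted: `py 0 = y^(1) = (0,1,0,0)`). -/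
def py : ℕ → List Bool
  | 0 => [false, true, false, false]
  | k + 1 => [false] ++ py k ++ [false, false] ++ px k ++ [false]
end

/-- Interleaving `(z₁,x₁,z₂,x₂,…,z_{k-1},x_{k-1},z_k)` of `z` and `x`
(used with `|z| = |x| + 1`). -/
def interleave : List Bool → List Bool → List Bool
  | z, [] => z
  | [], _ :: _ => []
  | a :: l, b :: m => a :: b :: interleave l m

/-- `N(w, p)`: the number of occurrences of the wildcard string `w`
(entries `none` are wildcards `J`, `some b` is a letter of `Γ = {X, Y}`)
as a subsequence of `p`, each wildcard matching either letter. -/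
def Nw : List (Option Bool) → List Bool → ℕ
  | [], _ => 1
  | _ :: _, [] => 0
  | a :: w, b :: p =>
      Nw (a :: w) p + if a = none ∨ a = some b then Nw w p else 0

/-- `U_r(k)`: wildcard strings of length between `r` and `k` with exactly `r`
non-wildcard symbols. -/
def Ur (r k : ℕ) : Set (List (Option Bool)) :=
  {w | r ≤ w.length ∧ w.length ≤ k ∧ w.countP (fun a => a.isSome) = r}

/-- `U(k₁, k₂) = U₁(k₁) ∪ U₂(k₂)`. -/
def Uset (k1 k2 : ℕ) : Set (List (Option Bool)) := Ur 1 k1 ∪ Ur 2 k2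

/-- `p ∼^{U(k₁,k₂)} q`: `N(w,p) = N(w,q)` for all `w ∈ U(k₁,k₂)`. -/
def equivU (k1 k2 : ℕ) (p q : List Bool) : Prop :=
  ∀ w ∈ Uset k1 k2, Nw w p = Nw w q

/-- `S_U(k₁,k₂)`: the smallest `m` for which two distinct strings
`p, q ∈ Γ^m` satisfy `p ∼^{U(k₁,k₂)} q`. -/
noncomputable def SU (k1 k2 : ℕ) : ℕ :=
  sInf {m | ∃ p q : List Bool, p.length = m ∧ q.length = m ∧ p ≠ q ∧
    equivU k1 k2 p q}

/-- `h_{x,y}(p)`: replace each letter of `p` (`false = X`, `true = Y`) by `x`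
resp. `y` padded with one `0` at each end. -/
def hxy (x y : List Bool) (p : List Bool) : List Bool :=
  (p.map (fun b => [false] ++ (if b then y else x) ++ [false])).flatten

lemma gs_len : ∀ n (x : List Bool), x.length ≤ n → ∀ w ∈ gappedSubseqs 2 x,
    2 * w.length ≤ x.length + 1 := by
  intro n
  induction n with
  | zero =>
    intro x hx w hw
    match x, hx with
    | [], _ =>
      rw [gappedSubseqs] at hw
      simp at hw; subst hw; simp
  | succ n ih =>
    intro x hx w hw
    match x with
    | [] =>
      rw [gappedSubseqs] at hw
      simp at hw; subst hw; simp
    | a :: l =>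
      rw [gappedSubseqs] at hw
      simp only [Multiset.mem_add, Multiset.mem_map] at hw
      rcases hw with hw | ⟨v, hv, rfl⟩
      · have := ih l (by simp at hx; omega) w hw
        simp at hx ⊢; omega
      · have := ih (l.drop 1) (by simp at hx ⊢; omega) v hv
        simp at hx this ⊢; omega

lemma dDeck_small {k : ℕ} (w : List Bool) (h : w.length < 2 * k - 1) (hk : 1 ≤ k) :
    dDeck 2 k w = 0 := by
  rw [dDeck, Multiset.filter_eq_nil]
  intro v hv hlen
  have := gs_len w.length w le_rfl v hv
  omega

lemma interleave_length : ∀ (x z : List Bool), z.length = x.length + 1 →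
    (interleave z x).length = z.length + x.length := by
  intro x
  induction x with
  | nil => intro z _; rw [interleave]; simp
  | cons b m ih =>
    intro z hz
    match z with
    | a :: c :: l =>
      have : interleave (a :: c :: l) (b :: m) = a :: b :: interleave (c :: l) m := rfl
      rw [this]
      have := ih (c :: l) (by simp at hz ⊢; omega)
      simp at hz this ⊢; omega
    | [a] => simp at hz

lemma interleave_dDeck : ∀ (x z : List Bool), z.length = x.length + 1 →
    dDeck 2 z.length (interleave z x) = {z} := by
  intro x
  induction x with
  | nil =>
    intro z hz
    match z with
    | [a] =>
      show dDeck 2 _ [a] = _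
      have e0 : gappedSubseqs 2 [] = {[]} := by rw [gappedSubseqs]
      have e1 : gappedSubseqs 2 [a] = {[], [a]} := by
        rw [gappedSubseqs, List.drop_nil, e0]; rfl
      rw [dDeck, e1]
      simp [Multiset.filter_singleton, Multiset.insert_eq_cons, Multiset.filter_cons]
  | cons b m ih =>
    intro z hz
    match z with
    | a :: c :: l =>
      have hlen : (c :: l).length = m.length + 1 := by simp at hz ⊢; omega
      have hll : l.length = m.length := by simpa using hlen
      have hI : interleave (a :: c :: l) (b :: m) = a :: b :: interleave (c :: l) m := rfl
      rw [hI]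
      set t := interleave (c :: l) m with ht
      have htl : t.length = 2 * m.length + 1 := by
        rw [ht, interleave_length m _ hlen]; simp; omega
      have hk : (a :: c :: l).length = m.length + 2 := by simp; omega
      rw [hk]
      rw [dDeck, gappedSubseqs, gappedSubseqs]
      simp only [show (2:ℕ)-1 = 1 from rfl, List.drop_one, List.tail_cons,
        Multiset.filter_add, Multiset.filter_map]
      have h1 : Multiset.filter (fun w => List.length w = m.length + 2) (gappedSubseqs 2 t) = 0 := by
        rw [Multiset.filter_eq_nil]
        intro v hv hc
        have := gs_len t.length t le_rfl v hv
        omega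
      have h2 : Multiset.filter ((fun w => List.length w = m.length + 2) ∘ (b :: ·))
          (gappedSubseqs 2 t.tail) = 0 := by
        rw [Multiset.filter_eq_nil]
        intro v hv hc
        have := gs_len t.tail.length t.tail le_rfl v hv
        simp only [Function.comp, List.length_cons] at hc
        simp only [List.length_tail] at this
        omega
      have h3 : Multiset.filter ((fun w => List.length w = m.length + 2) ∘ (a :: ·))
          (gappedSubseqs 2 t) = Multiset.filter (fun w => List.length w = m.length + 1)
          (gappedSubseqs 2 t) := by
        apply Multiset.filter_congr
        intro v _
        simp [Function.comp]
      have h4 : Multiset.filter (fun w => List.length w = m.length + 1)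
          (gappedSubseqs 2 t) = {c :: l} := by
        have := ih (c :: l) hlen
        rw [dDeck] at this
        rw [← ht] at this
        simpa [hlen] using this
      rw [h1, h2, h3, h4]
      simp

/-- For any `z` of length `k` and bits `x₁,…,x_{k-1}`, the
interleaved string of length `2k-1` has exact gapped `k`-deck `{z}`;
consequently, for `k ≥ 2` there are two distinct binary strings of length
`2k-1` with the same exact gapped `k`-deck, and any string of length
`< 2k-1` has empty exact gapped `k`-deck. -/
theorem stmt3 (k : ℕ) (hk : 1 ≤ k) :
    (∀ z x : List Bool, z.length = k → x.length = k - 1 →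
      dDeck 2 k (interleave z x) = {z}) ∧
    (2 ≤ k → ∃ u v : List Bool, u.length = 2 * k - 1 ∧ v.length = 2 * k - 1 ∧
      u ≠ v ∧ dDeck 2 k u = dDeck 2 k v) ∧
    (∀ w : List Bool, w.length < 2 * k - 1 → dDeck 2 k w = 0) := by
  have part1 : ∀ z x : List Bool, z.length = k → x.length = k - 1 →
      dDeck 2 k (interleave z x) = {z} := by
    intro z x hz hx
    have hzx : z.length = x.length + 1 := by omega
    have := interleave_dDeck x z hzx
    rwa [hz] at this
  refine ⟨part1, ?_, fun w hw => dDeck_small w hw hk⟩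
  intro h2
  obtain ⟨n, rfl⟩ : ∃ n, k = n + 2 := ⟨k - 2, by omega⟩
  refine ⟨interleave (List.replicate (n + 2) false) (true :: List.replicate n false),
    interleave (List.replicate (n + 2) false) (false :: List.replicate n false),
    ?_, ?_, ?_, ?_⟩
  · rw [interleave_length _ _ (by simp)]; simp; omega
  · rw [interleave_length _ _ (by simp)]; simp; omega
  · rw [show List.replicate (n + 2) false = false :: List.replicate (n + 1) false from rfl]
    intro h
    have : (false : Bool) :: true :: interleave (List.replicate (n + 1) false) (List.replicate n false)
        = false :: false :: interleave (List.replicate (n + 1) false) (List.replicate n false) := h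
    simp at this
  · rw [part1 _ _ (by simp) (by simp), part1 _ _ (by simp) (by simp)]
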